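/- For the saddle point t₀ of ψ(t) = α/(t(1-t)) - log(1-t) at θ = 0: as α → 0⁺, the root t₀ of t²(t-1) + α(1-2t) = 0 in (0,1) satisfies t₀ = α^{1/2} - α/2 + O(α^{3/2}). -/

import Mathlib

/-!
Substitute `α = s ^ 2`. At `t = s - s ^ 2 / 2 ∓ s ^ 3` the cubic equals `s ^ 4` times a polynomial
in `s` with constant term `5/4`, resp. `-11/4`, so for small `s` it changes sign on this interval
and the intermediate value theorem yields a root within `s ^ 3 = α ^ (3/2)` of `√α - α / 2`.
-/

open Filter Asymptotics Set

def saddleCubic (α t : ℝ) : ℝ := t ^ 2 * (t - 1) + α * (1 - 2 * t)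

section

variable {s : ℝ}

lemma saddleCubic_lower_pos (hs0 : 0 < s) (hs1 : s ≤ 1 / 2) :
    0 < saddleCubic (s ^ 2) (s - s ^ 2 / 2 - s ^ 3) := by
  have hexpand : saddleCubic (s ^ 2) (s - s ^ 2 / 2 - s ^ 3)
      = s ^ 4 * (5/4 - 5/4 * s + 15/8 * s ^ 2 + 9/4 * s ^ 3 - 3/2 * s ^ 4 - s ^ 5) := by
    unfold saddleCubic; ring
  rw [hexpand]
  refine mul_pos (by positivity) ?_
  nlinarith [pow_pos hs0 2, pow_pos hs0 3, pow_pos hs0 4, pow_pos hs0 5]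

lemma saddleCubic_upper_neg (hs0 : 0 < s) (hs1 : s ≤ 1 / 2) :
    saddleCubic (s ^ 2) (s - s ^ 2 / 2 + s ^ 3) < 0 := by
  have hexpand : saddleCubic (s ^ 2) (s - s ^ 2 / 2 + s ^ 3)
      = s ^ 4 * (-11/4 + 11/4 * s - 33/8 * s ^ 2 + 15/4 * s ^ 3 - 3/2 * s ^ 4 + s ^ 5) := by
    unfold saddleCubic; ring
  rw [hexpand]
  refine mul_neg_of_pos_of_neg (by positivity) ?_
  nlinarith [pow_pos hs0 2, pow_pos hs0 3, pow_pos hs0 4, pow_pos hs0 5]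

lemma exists_saddleCubic_root_mem_Icc (hs0 : 0 < s) (hs1 : s ≤ 1 / 2) :
    ∃ t ∈ Icc (s - s ^ 2 / 2 - s ^ 3) (s - s ^ 2 / 2 + s ^ 3), saddleCubic (s ^ 2) t = 0 := by
  have hcont : ContinuousOn (saddleCubic (s ^ 2))
      (Icc (s - s ^ 2 / 2 - s ^ 3) (s - s ^ 2 / 2 + s ^ 3)) := by
    unfold saddleCubic; fun_prop
  exact intermediate_value_Icc' (by nlinarith [pow_pos hs0 3]) hcont
    ⟨(saddleCubic_upper_neg hs0 hs1).le, (saddleCubic_lower_pos hs0 hs1).le⟩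

lemma Icc_subset_Ioo_zero_one (hs0 : 0 < s) (hs1 : s ≤ 1 / 2) :
    Icc (s - s ^ 2 / 2 - s ^ 3) (s - s ^ 2 / 2 + s ^ 3) ⊆ Ioo 0 1 :=
  Icc_subset_Ioo (by nlinarith [pow_pos hs0 2]) (by nlinarith [pow_pos hs0 2])

end

lemma exists_saddleCubic_root_near {α : ℝ} (hα0 : 0 < α) (hα1 : α ≤ 1 / 4) :
    ∃ t ∈ Ioo 0 1, saddleCubic α t = 0 ∧ |t - (√α - α / 2)| ≤ α ^ (3 / 2 : ℝ) := by
  have hs0 : 0 < √α := Real.sqrt_pos.mpr hα0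
  have hs1 : √α ≤ 1 / 2 := Real.sqrt_le_iff.mpr ⟨by norm_num, by norm_num; linarith⟩
  have hα : α = √α ^ 2 := (Real.sq_sqrt hα0.le).symm
  have h32 : α ^ (3 / 2 : ℝ) = √α ^ 3 := by
    rw [Real.rpow_div_two_eq_sqrt _ hα0.le, ← Real.rpow_natCast]; norm_num
  obtain ⟨t, ht, hroot⟩ := exists_saddleCubic_root_mem_Icc hs0 hs1
  refine ⟨t, Icc_subset_Ioo_zero_one hs0 hs1 ht, hα ▸ hroot, ?_⟩
  rw [h32, abs_le]
  constructor <;> nlinarith [ht.1, ht.2]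

theorem saddle_t0_asymptotics :
    ∃ t0 : ℝ → ℝ,
      (∀ᶠ α in nhdsWithin 0 (Set.Ioi (0:ℝ)),
        t0 α ∈ Set.Ioo (0:ℝ) 1 ∧
          (t0 α)^2 * (t0 α - 1) + α * (1 - 2 * t0 α) = 0) ∧
      (fun α => t0 α - (Real.sqrt α - α/2)) =O[nhdsWithin 0 (Set.Ioi (0:ℝ))]
        fun α => α ^ (3/2 : ℝ) := by
  choose! t0 ht0 using fun α (hα : α ∈ Ioc (0 : ℝ) (1 / 4)) =>
    exists_saddleCubic_root_near hα.1 hα.2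
  have hsmall : Ioc (0 : ℝ) (1 / 4) ∈ nhdsWithin 0 (Ioi 0) := Ioc_mem_nhdsGT (by norm_num)
  refine ⟨t0, ?_, IsBigO.of_bound 1 ?_⟩
  · filter_upwards [hsmall] with α hα using ⟨(ht0 α hα).1, (ht0 α hα).2.1⟩
  · filter_upwards [hsmall] with α hα
    rw [one_mul, Real.norm_eq_abs, Real.norm_of_nonneg (Real.rpow_nonneg hα.1.le _)]
    exact (ht0 α hα).2.2
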